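/- Let (p, q) solve the matrix Painlevé III(D₈) system generated by the Hamiltonian t·H = Tr(pqpq + pq − q − t q^{-1}), i.e. the Hamiltonian equations t q' = 2qpq + q together with the corresponding equation for t p', with q invertible. Then the transformation π : (p, q) ↦ (−t^{-1} q (pq + 1/2), t q^{-1}) maps solutions to solutions of the same system. -/

import Mathlib

/-- Entrywise derivative of a matrix-valued function at a point. -/
def MHasDerivAt {n : ℕ} (f : ℝ → Matrix (Fin n) (Fin n) ℂ)
    (f' : Matrix (Fin n) (Fin n) ℂ) (t : ℝ) : Prop :=
  ∀ i j : Fin n, HasDerivAt (fun s : ℝ => f s i j) (f' i j) t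

/-- Right-hand side of the `q`-equation of matrix PIII(D₈): `t q' = 2qpq + q`. -/
noncomputable def D8q {n : ℕ} (p q : ℝ → Matrix (Fin n) (Fin n) ℂ) (t : ℝ) :
    Matrix (Fin n) (Fin n) ℂ :=
  (t : ℂ)⁻¹ • ((2 : ℂ) • (q t * p t * q t) + q t)

/-- Right-hand side of the `p`-equation of matrix PIII(D₈):
`t p' = −2pqp − p + 1 − t q⁻²`. -/
noncomputable def D8p {n : ℕ} (p q : ℝ → Matrix (Fin n) (Fin n) ℂ) (t : ℝ) :
    Matrix (Fin n) (Fin n) ℂ :=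
  (t : ℂ)⁻¹ • (-((2 : ℂ) • (p t * q t * p t)) - p t + 1 - (t : ℂ) • ((q t)⁻¹ * (q t)⁻¹))

/-- The image of `q` under `π : (p,q) ↦ (−t⁻¹ q(pq + 1/2), t q⁻¹)`. -/
noncomputable def piD8q {n : ℕ} (q : ℝ → Matrix (Fin n) (Fin n) ℂ) :
    ℝ → Matrix (Fin n) (Fin n) ℂ :=
  fun t => (t : ℂ) • (q t)⁻¹

/-- The image of `p` under `π : (p,q) ↦ (−t⁻¹ q(pq + 1/2), t q⁻¹)`. -/
noncomputable def piD8p {n : ℕ} (p q : ℝ → Matrix (Fin n) (Fin n) ℂ) :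
    ℝ → Matrix (Fin n) (Fin n) ℂ :=
  fun t => (-(t : ℂ)⁻¹) • (q t * (p t * q t + (1 / 2 : ℂ) • 1))

section Helpers

variable {n : ℕ} {t : ℝ}

theorem mhd_const (C : Matrix (Fin n) (Fin n) ℂ) (t : ℝ) :
    MHasDerivAt (fun _ => C) 0 t := fun i j => by
  simpa using hasDerivAt_const t (C i j)

theorem mhd_add {f g : ℝ → Matrix (Fin n) (Fin n) ℂ} {f' g' : Matrix (Fin n) (Fin n) ℂ}
    (hf : MHasDerivAt f f' t) (hg : MHasDerivAt g g' t) :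
    MHasDerivAt (fun s => f s + g s) (f' + g') t := fun i j => by
  simpa [Matrix.add_apply] using (hf i j).fun_add (hg i j)

theorem mhd_mul {f g : ℝ → Matrix (Fin n) (Fin n) ℂ} {f' g' : Matrix (Fin n) (Fin n) ℂ}
    (hf : MHasDerivAt f f' t) (hg : MHasDerivAt g g' t) :
    MHasDerivAt (fun s => f s * g s) (f' * g t + f t * g') t := by
  intro i j
  have h : HasDerivAt (fun s => ∑ k, f s i k * g s k j)
      (∑ k, (f' i k * g t k j + f t i k * g' k j)) t :=
    HasDerivAt.fun_sum fun k _ => (hf i k).fun_mul (hg k j)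
  simpa [Matrix.mul_apply, Matrix.add_apply, Finset.sum_add_distrib] using h

theorem mhd_smul {u : ℝ → ℂ} {u' : ℂ} {f : ℝ → Matrix (Fin n) (Fin n) ℂ}
    {f' : Matrix (Fin n) (Fin n) ℂ} (hu : HasDerivAt u u' t) (hf : MHasDerivAt f f' t) :
    MHasDerivAt (fun s => u s • f s) (u' • f t + u t • f') t := fun i j => by
  simpa [Matrix.smul_apply, Matrix.add_apply, smul_eq_mul] using (hu.fun_mul (hf i j))

theorem mhd_inv {q : ℝ → Matrix (Fin n) (Fin n) ℂ} {q' : Matrix (Fin n) (Fin n) ℂ}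
    (hinv : ∀ s : ℝ, IsUnit (q s)) (hq : MHasDerivAt q q' t) :
    MHasDerivAt (fun s => (q s)⁻¹) (-((q t)⁻¹ * q' * (q t)⁻¹)) t := by
  have hdu : ∀ s : ℝ, IsUnit (q s).det := fun s => (Matrix.isUnit_iff_isUnit_det _).mp (hinv s)
  have hent : ∀ i j, DifferentiableAt ℝ (fun s => q s i j) t := fun i j =>
    (hq i j).differentiableAt
  have hdet : DifferentiableAt ℝ (fun s => (q s).det) t := by
    simp only [Matrix.det_apply']
    exact DifferentiableAt.fun_sum fun σ _ =>
      (DifferentiableAt.fun_finsetProd fun k _ => hent (σ k) k).const_mul _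
  have hadj : ∀ i j, DifferentiableAt ℝ (fun s => (q s).adjugate i j) t := by
    intro i j
    simp only [Matrix.adjugate_apply, Matrix.det_apply']
    refine DifferentiableAt.fun_sum fun σ _ => DifferentiableAt.const_mul ?_ _
    refine DifferentiableAt.fun_finsetProd fun k _ => ?_
    by_cases h : σ k = j
    · simp only [Matrix.updateRow_apply, h, if_pos rfl]
      exact differentiableAt_const _
    · simp only [Matrix.updateRow_apply, if_neg h]
      exact hent _ _
  have hr : ∀ i j, DifferentiableAt ℝ (fun s => (q s)⁻¹ i j) t := by
    intro i j
    have hne : (q t).det ≠ 0 := (hdu t).ne_zero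
    simp only [Matrix.inv_def, Matrix.smul_apply, smul_eq_mul, Ring.inverse_eq_inv]
    exact (hdet.inv hne).mul (hadj i j)
  set r' : Matrix (Fin n) (Fin n) ℂ :=
    Matrix.of fun i j => deriv (fun s => (q s)⁻¹ i j) t with hr'def
  have hr' : MHasDerivAt (fun s => (q s)⁻¹) r' t := fun i j => by
    simpa [hr'def] using (hr i j).hasDerivAt
  have hone : MHasDerivAt (fun s => q s * (q s)⁻¹) 0 t := by
    have he : (fun s => q s * (q s)⁻¹) = fun _ => (1 : Matrix (Fin n) (Fin n) ℂ) := by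
      funext s
      exact Matrix.mul_nonsing_inv _ (hdu s)
    rw [he]
    exact mhd_const _ _
  have hmul := mhd_mul hq hr'
  have hzero : q' * (q t)⁻¹ + q t * r' = 0 := by
    ext i j
    simpa using (hmul i j).unique (hone i j)
  have h2 : q t * r' = -(q' * (q t)⁻¹) := by
    rw [eq_neg_iff_add_eq_zero, add_comm]
    exact hzero
  have hRQ : (q t)⁻¹ * q t = 1 := Matrix.nonsing_inv_mul _ (hdu t)
  have : r' = -((q t)⁻¹ * q' * (q t)⁻¹) := by
    calc r' = (q t)⁻¹ * (q t * r') := by rw [← mul_assoc, hRQ, one_mul]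
      _ = (q t)⁻¹ * -(q' * (q t)⁻¹) := by rw [h2]
      _ = -((q t)⁻¹ * q' * (q t)⁻¹) := by rw [mul_neg, mul_assoc]
  rw [← this]
  exact hr'

end Helpers

/-- `π` is a Bäcklund transformation of matrix Painlevé III(D₈): it maps solutions
to solutions of the same system. -/
theorem matrixPIIID8_pi_backlund (n : ℕ) (p q : ℝ → Matrix (Fin n) (Fin n) ℂ)
    (hinv : ∀ t : ℝ, IsUnit (q t))
    (hq : ∀ t : ℝ, t ≠ 0 → MHasDerivAt q (D8q p q t) t)
    (hp : ∀ t : ℝ, t ≠ 0 → MHasDerivAt p (D8p p q t) t) :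
    ∀ t : ℝ, t ≠ 0 →
      MHasDerivAt (piD8q q) (D8q (piD8p p q) (piD8q q) t) t ∧
      MHasDerivAt (piD8p p q) (D8p (piD8p p q) (piD8q q) t) t := by
  intro t ht
  have htc : (t : ℂ) ≠ 0 := Complex.ofReal_ne_zero.mpr ht
  have hdu : IsUnit (q t).det := (Matrix.isUnit_iff_isUnit_det _).mp (hinv t)
  set Q := q t with hQdef
  set P := p t with hPdef
  set R := (q t)⁻¹ with hRdef
  have hQR : Q * R = 1 := Matrix.mul_nonsing_inv _ hdu
  have hRQ : R * Q = 1 := Matrix.nonsing_inv_mul _ hdu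
  have hQR' : ∀ M : Matrix (Fin n) (Fin n) ℂ, Q * (R * M) = M := fun M => by
    rw [← mul_assoc, hQR, one_mul]
  have hRQ' : ∀ M : Matrix (Fin n) (Fin n) ℂ, R * (Q * M) = M := fun M => by
    rw [← mul_assoc, hRQ, one_mul]
  have hq' := hq t ht
  have hp' := hp t ht
  have hid : HasDerivAt (fun s : ℝ => (s : ℂ)) ((1 : ℝ) : ℂ) t := (hasDerivAt_id t).ofReal_comp
  have hinvd : MHasDerivAt (fun s => (q s)⁻¹) (-(R * D8q p q t * R)) t := mhd_inv hinv hq'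
  -- the inverse of the transformed q
  have hsmulinv : ((t : ℂ) • R)⁻¹ = (t : ℂ)⁻¹ • Q := by
    have : Invertible (t : ℂ) := invertibleOfNonzero htc
    rw [hRdef, Matrix.inv_smul ((q t)⁻¹) ((t : ℂ)) (Matrix.isUnit_nonsing_inv_det _ hdu),
      Matrix.nonsing_inv_nonsing_inv _ hdu, invOf_eq_inv]
  constructor
  · have h := mhd_smul hid hinvd
    have e : D8q (piD8p p q) (piD8q q) t
        = ((1 : ℝ) : ℂ) • (q t)⁻¹ + (t : ℂ) • (-(R * D8q p q t * R)) := by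
      simp only [D8q, piD8q, piD8p, ← hQdef, ← hPdef, ← hRdef]
      simp only [show Q⁻¹ = R from rfl]
      simp only [mul_add, add_mul, smul_mul_assoc, mul_smul_comm, smul_add, smul_smul,
        mul_one, one_mul, mul_assoc, hQR', hRQ', hQR, hRQ, neg_smul, smul_neg, mul_neg, neg_mul]
      match_scalars <;> (field_simp; try rw [div_eq_iff (by norm_num [mul_ne_zero_iff, htc])]; try ring)
      all_goals norm_num
    rw [e]
    exact h
  · have hgd : MHasDerivAt (fun s => q s * (p s * q s + (1 / 2 : ℂ) • 1))
        (D8q p q t * (P * Q + (1 / 2 : ℂ) • 1)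
          + Q * ((D8p p q t * Q + P * D8q p q t) + 0)) t :=
      mhd_mul hq' (mhd_add (mhd_mul hp' hq') (mhd_const _ _))
    have hu : HasDerivAt (fun s : ℝ => -(s : ℂ)⁻¹) (((t : ℂ) ^ 2)⁻¹) t := by
      have h0 : HasDerivAt (fun s : ℝ => -(s⁻¹)) ((t ^ 2)⁻¹) t := by
        simpa using (hasDerivAt_inv ht).fun_neg
      simpa [Complex.ofReal_inv, Complex.ofReal_neg, Complex.ofReal_pow] using h0.ofReal_comp
    have h := mhd_smul hu hgd
    have e : D8p (piD8p p q) (piD8q q) t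
        = (((t : ℂ) ^ 2)⁻¹) • (Q * (P * Q + (1 / 2 : ℂ) • 1))
          + (-(t : ℂ)⁻¹) • (D8q p q t * (P * Q + (1 / 2 : ℂ) • 1)
            + Q * ((D8p p q t * Q + P * D8q p q t) + 0)) := by
      simp only [D8p, D8q, piD8q, piD8p, hsmulinv, ← hQdef, ← hPdef, ← hRdef]
      simp only [show Q⁻¹ = R from rfl, hsmulinv]
      simp only [sub_eq_add_neg, mul_add, add_mul, smul_mul_assoc, mul_smul_comm, smul_add,
        smul_smul, mul_one, one_mul, mul_assoc, hQR', hRQ', hQR, hRQ, neg_smul, smul_neg,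
        mul_neg, neg_mul, neg_add, add_zero, neg_neg]
      match_scalars <;> (field_simp; try rw [div_eq_iff (by norm_num [mul_ne_zero_iff, htc])]; try ring)
      all_goals norm_num
    rw [e]
    exact h
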